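/- arXiv:1705.09271 — 5 statements merged into one kernel-verified Lean document; each statement's English description precedes it below -/
import Mathlib

section
/- If εn balls are thrown independently and uniformly at random into cn/lg lg lg n bins (constants 0 < ε ≤ 1, c > 0 with ε·lg(e)/c > 1, n large), then the expected number of balls that land alone in their bin is O(n/(lg lg n)^d) for some constant d > 1, in particular o(n). -/
open Finset Filter Asymptotics

/-- `lg lg n` (base-2 iterated logarithm). -/
noncomputable def llg (x : ℝ) : ℝ := Real.logb 2 (Real.logb 2 x)

/-- `lg lg lg n`. -/
noncomputable def lll (x : ℝ) : ℝ := Real.logb 2 (llg x)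

/-- Number of balls that land alone in their bin, for a placement `f` of `k` balls in `m` bins. -/
def succCount (k m : ℕ) (f : Fin k → Fin m) : ℕ :=
  (univ.filter (fun i => ∀ i', f i' = f i → i' = i)).card

/-- Expected number of balls landing alone, uniform over placements of `k` balls into `m` bins. -/
noncomputable def succExp (k m : ℕ) : ℝ :=
  (∑ f : Fin k → Fin m, (succCount k m f : ℝ)) / (m : ℝ) ^ k

/-!
Each ball is alone with probability `(1 - 1/m)^(k-1) ≤ e · exp(-k/m)`, so the expectation is at
most `e · k · exp(-k/m)`. With `k = εn` and `m = cn / lg lg lg n` the exponent is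
`(ε/c) · lg lg lg n`, and `exp(-(ε/c) · lg x) = x^(-ε lg e / c)`; at `x = lg lg n` this is the
bound with `d = ε lg e / c > 1`.
-/

theorem card_isolated_fiber {α β : Type*} [Fintype α] [DecidableEq α] [Fintype β] [DecidableEq β]
    (a : α) (b : β) :
    #{f : α → β | (∀ a', f a' = f a → a' = a) ∧ f a = b}
      = (Fintype.card β - 1) ^ (Fintype.card α - 1) := by
  have hfiber : ({f : α → β | (∀ a', f a' = f a → a' = a) ∧ f a = b} : Finset _)
      = Fintype.piFinset fun j => if j = a then {b} else {b}ᶜ := by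
    ext f
    simp only [mem_filter, mem_univ, true_and, Fintype.mem_piFinset]
    constructor
    · rintro ⟨hiso, rfl⟩ j
      split_ifs with hj
      · simp [hj]
      · simpa using mt (hiso j) hj
    · intro h
      have hfa : f a = b := by simpa using h a
      refine ⟨fun j hj => ?_, hfa⟩
      by_contra hja
      simpa [hja, hj, hfa] using h j
  rw [hfiber, Fintype.card_piFinset]
  simp [apply_ite, prod_ite, filter_ne', card_compl]

theorem card_isolated {α β : Type*} [Fintype α] [DecidableEq α] [Fintype β] [DecidableEq β]
    (a : α) :
    #{f : α → β | ∀ a', f a' = f a → a' = a}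
      = Fintype.card β * (Fintype.card β - 1) ^ (Fintype.card α - 1) := by
  rw [card_eq_sum_card_fiberwise (f := fun f => f a) (t := univ) (fun _ _ => mem_univ _)]
  simp only [filter_filter, card_isolated_fiber, sum_const, card_univ, smul_eq_mul]

theorem sum_succCount (k m : ℕ) :
    ∑ f : Fin k → Fin m, succCount k m f = k * (m * (m - 1) ^ (k - 1)) := by
  calc ∑ f : Fin k → Fin m, succCount k m f
      = ∑ i : Fin k, #{f : Fin k → Fin m | ∀ i', f i' = f i → i' = i} := by
        simp only [succCount, card_filter]
        exact sum_comm
    _ = k * (m * (m - 1) ^ (k - 1)) := by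
        rw [sum_congr rfl fun i _ => by convert card_isolated (β := Fin m) i]
        simp

theorem succExp_eq {k m : ℕ} (hm : 0 < m) :
    succExp k m = k * (1 - 1 / (m : ℝ)) ^ (k - 1) := by
  rcases k with _ | k
  · simp [succExp, succCount]
  have hm' : (m : ℝ) ≠ 0 := by positivity
  rw [succExp, ← Nat.cast_sum, sum_succCount, one_sub_div hm', div_pow]
  push_cast [Nat.cast_sub hm, Nat.add_sub_cancel]
  field_simp
  ring

theorem succExp_le {k m : ℕ} (hm : 0 < m) :
    succExp k m ≤ Real.exp 1 * k * Real.exp (-(k / m)) := by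
  rw [succExp_eq hm]
  rcases k with _ | k
  · simp
  have hm1 : (1 : ℝ) ≤ m := by exact_mod_cast hm
  have hbase : 0 ≤ 1 - 1 / (m : ℝ) := by
    rw [sub_nonneg, div_le_one (by positivity)]; exact hm1
  calc ((k + 1 : ℕ) : ℝ) * (1 - 1 / (m : ℝ)) ^ (k + 1 - 1)
      ≤ (k + 1 : ℕ) * Real.exp (-(1 / m)) ^ k := by
        rw [Nat.add_sub_cancel]
        gcongr
        exact Real.one_sub_le_exp_neg _
      _ = Real.exp (1 / m) * (k + 1 : ℕ) * Real.exp (-((k + 1 : ℕ) / m)) := by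
        rw [← Real.exp_nat_mul, mul_comm (Real.exp _), mul_assoc, ← Real.exp_add]
        push_cast
        ring_nf
      _ ≤ Real.exp 1 * (k + 1 : ℕ) * Real.exp (-((k + 1 : ℕ) / m)) := by
        gcongr
        rw [div_le_one (by positivity)]; exact hm1

theorem exp_neg_mul_logb {x : ℝ} (hx : 0 < x) (a b : ℝ) :
    Real.exp (-(a * Real.logb b x)) = x ^ (-(a * Real.logb b (Real.exp 1))) := by
  rw [Real.rpow_def_of_pos hx, Real.logb, Real.logb, Real.log_exp]
  ring_nf

theorem tendsto_llg_atTop : Tendsto llg atTop atTop :=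
  (Real.tendsto_logb_atTop one_lt_two).comp (Real.tendsto_logb_atTop one_lt_two)

theorem isLittleO_const_mul_div_rpow {α : Type*} {l : Filter α} {f g : α → ℝ}
    (hg : Tendsto g l atTop) {d : ℝ} (hd : 0 < d) (C : ℝ) :
    (fun x => C * f x / g x ^ d) =o[l] f := by
  have hlim : Tendsto (fun x => C / g x ^ d) l (nhds 0) :=
    tendsto_const_nhds.div_atTop ((tendsto_rpow_atTop hd).comp hg)
  simpa [mul_div_right_comm, mul_comm] using
    (isBigO_refl f l).mul_isLittleO ((isLittleO_one_iff ℝ).2 hlim)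

theorem stmt4_general (ε c : ℝ) (hε0 : 0 < ε) (hc : 0 < c)
    (hlarge : 1 < ε * Real.logb 2 (Real.exp 1) / c) :
    ∃ d > (1 : ℝ), ∃ C > (0 : ℝ),
      (∀ᶠ n : ℕ in atTop, ∀ k m : ℕ,
          (k : ℝ) = ε * n → (m : ℝ) = c * n / lll n →
          succExp k m ≤ C * n / llg n ^ d) ∧
      (fun n : ℕ => C * n / llg n ^ d) =o[atTop] fun n : ℕ => (n : ℝ) := by
  set d := ε * Real.logb 2 (Real.exp 1) / c
  have hllg := tendsto_llg_atTop.comp tendsto_natCast_atTop_atTop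
  refine ⟨d, hlarge, Real.exp 1 * ε, by positivity, ?_,
    isLittleO_const_mul_div_rpow hllg (by linarith) _⟩
  filter_upwards [hllg.eventually_ge_atTop 2, eventually_gt_atTop 0] with n hllg2 hn k m hk hm
  replace hllg2 : 2 ≤ llg n := hllg2
  have hlll : 0 < lll n := Real.logb_pos one_lt_two (by linarith)
  have hm0 : 0 < m := by
    have : (0 : ℝ) < m := by rw [hm]; positivity
    exact_mod_cast this
  have hkm : (k : ℝ) / m = ε / c * Real.logb 2 (llg n) := by
    rw [hk, hm, lll]; field_simp
  calc succExp k m ≤ Real.exp 1 * k * Real.exp (-(k / m)) := succExp_le hm0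
    _ = Real.exp 1 * ε * n * llg n ^ (-d) := by
      rw [hkm, exp_neg_mul_logb (by linarith), hk, div_mul_eq_mul_div]
      ring
    _ = Real.exp 1 * ε * n / llg n ^ d := by
      rw [Real.rpow_neg (by linarith), div_eq_mul_inv]

/-- For `εn` balls into `cn/lg lg lg n` bins (with `ε·lg e/c > 1`), the expected number of balls
that land alone is `O(n/(lg lg n)^d)` for some `d > 1`, in particular `o(n)`. -/
theorem stmt4 (ε c : ℝ) (hε0 : 0 < ε) (hε1 : ε ≤ 1) (hc : 0 < c)
    (hlarge : 1 < ε * Real.logb 2 (Real.exp 1) / c) :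
    ∃ d > (1 : ℝ), ∃ C > (0 : ℝ),
      (∀ᶠ n : ℕ in atTop, ∀ k m : ℕ,
          (k : ℝ) = ε * n → (m : ℝ) = c * n / lll n →
          succExp k m ≤ C * n / llg n ^ d) ∧
      (fun n : ℕ => C * n / llg n ^ d) =o[atTop] fun n : ℕ => (n : ℝ) :=
  stmt4_general ε c hε0 hc hlarge
end

section
/- Suppose a window of size m = cn/lg lg lg n is executed T = Ω(lg lg n) times, and in each execution at least εn balls are thrown uniformly at random into the m bins. Then the expected total number of collision bins summed over all executions is Ω(n·lg lg n / lg lg lg n). -/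
open Finset Filter

/-- Probability that the fixed bin `j` contains at least two of `k` balls thrown
uniformly and independently into `m` bins. -/
noncomputable def collProb (k m : ℕ) (j : Fin m) : ℝ :=
  ((univ.filter (fun f : Fin k → Fin m =>
      2 ≤ (univ.filter (fun i => f i = j)).card)).card : ℝ) / (m : ℝ) ^ k


lemma countA (k m : ℕ) (j : Fin m) :
    (univ.filter (fun f : Fin k → Fin m => ∀ i, f i ≠ j)).card = (m-1)^k := by
  have h : (univ.filter (fun f : Fin k → Fin m => ∀ i, f i ≠ j)) =
      Fintype.piFinset (fun _ : Fin k => univ.erase j) := by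
    ext f
    simp [Fintype.mem_piFinset]
  rw [h, Fintype.card_piFinset]
  simp [Finset.card_erase_of_mem]

lemma countB (k m : ℕ) (j : Fin m) (i₀ : Fin k) :
    (univ.filter (fun f : Fin k → Fin m => f i₀ = j ∧ ∀ i, i ≠ i₀ → f i ≠ j)).card
      = (m-1)^(k-1) := by
  have h : (univ.filter (fun f : Fin k → Fin m => f i₀ = j ∧ ∀ i, i ≠ i₀ → f i ≠ j)) =
      Fintype.piFinset (fun i : Fin k => if i = i₀ then {j} else univ.erase j) := by
    ext f
    simp only [mem_filter, mem_univ, true_and, Fintype.mem_piFinset]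
    constructor
    · rintro ⟨h1, h2⟩ i
      by_cases hi : i = i₀
      · subst hi; simp [h1]
      · simp [hi, h2 i hi]
    · intro h
      refine ⟨by simpa using h i₀, fun i hi => ?_⟩
      have := h i
      simp [hi] at this
      exact this
  rw [h, Fintype.card_piFinset]
  rw [← Finset.mul_prod_erase univ _ (mem_univ i₀)]
  have h2 : ∀ i ∈ univ.erase i₀,
      (if i = i₀ then ({j} : Finset (Fin m)) else univ.erase j).card = m - 1 := by
    intro i hi
    rw [if_neg (Finset.ne_of_mem_erase hi)]
    simp [Finset.card_erase_of_mem]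
  rw [Finset.prod_congr rfl h2]
  simp [Finset.card_erase_of_mem]


lemma cardle (k m : ℕ) (j : Fin m) :
    (univ.filter (fun f : Fin k → Fin m =>
        ¬ 2 ≤ (univ.filter (fun i => f i = j)).card)).card
      ≤ (m-1)^k + k * (m-1)^(k-1) := by
  have hsub : (univ.filter (fun f : Fin k → Fin m =>
        ¬ 2 ≤ (univ.filter (fun i => f i = j)).card)) ⊆
      (univ.filter (fun f : Fin k → Fin m => ∀ i, f i ≠ j)) ∪
      univ.biUnion (fun i₀ : Fin k =>
        univ.filter (fun f : Fin k → Fin m => f i₀ = j ∧ ∀ i, i ≠ i₀ → f i ≠ j)) := by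
    intro f hf
    simp only [mem_filter, mem_univ, true_and, not_le, Nat.lt_succ_iff, Nat.le_one_iff_eq_zero_or_eq_one] at hf
    rcases hf with h0 | h1
    · rw [Finset.card_eq_zero, Finset.filter_eq_empty_iff] at h0
      exact Finset.mem_union_left _ (by simp only [mem_filter, mem_univ, true_and]; exact fun i => h0 (mem_univ i))
    · rw [Finset.card_eq_one] at h1
      obtain ⟨i₀, hi₀⟩ := h1
      refine Finset.mem_union_right _ (Finset.mem_biUnion.mpr ⟨i₀, mem_univ _, ?_⟩)
      simp only [mem_filter, mem_univ, true_and]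
      constructor
      · have : i₀ ∈ univ.filter (fun i => f i = j) := hi₀ ▸ Finset.mem_singleton_self i₀
        exact (mem_filter.mp this).2
      · intro i hi hfi
        have : i ∈ univ.filter (fun i => f i = j) := mem_filter.mpr ⟨mem_univ _, hfi⟩
        rw [hi₀, Finset.mem_singleton] at this
        exact hi this
  calc _ ≤ _ := Finset.card_le_card hsub
    _ ≤ _ + _ := Finset.card_union_le _ _
    _ ≤ (m-1)^k + k * (m-1)^(k-1) := by
        gcongr
        · exact le_of_eq (countA k m j)
        · calc _ ≤ ∑ i₀ : Fin k, (univ.filter (fun f : Fin k → Fin m =>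
                f i₀ = j ∧ ∀ i, i ≠ i₀ → f i ≠ j)).card := Finset.card_biUnion_le
            _ = k * (m-1)^(k-1) := by
                simp only [countB]
                simp [mul_comm]

lemma auxineq (x : ℝ) (hx32 : (32:ℝ) ≤ x) : (1 + 3*x) * (4/x^2) ≤ 1/2 := by
  have hx2 : (0:ℝ) < x^2 := by positivity
  have heq : (1 + 3*x) * (4/x^2) = ((1+3*x)*4)/x^2 := by ring
  rw [heq, div_le_div_iff₀ hx2 (by norm_num : (0:ℝ) < 2)]
  nlinarith [hx32, sq_nonneg (x - 32)]

lemma realineq (k m : ℕ) (hm : 1 ≤ m) (hk : 32 * m ≤ k) :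
    ((m-1 : ℕ) : ℝ)^k + (k : ℝ) * ((m-1 : ℕ) : ℝ)^(k-1) ≤ (m : ℝ)^k / 2 := by
  have hk1 : 1 ≤ k := le_trans (by omega) hk
  rcases eq_or_lt_of_le hm with h1 | h2
  · -- m = 1
    rw [← h1]
    norm_num
    rw [zero_pow (by omega), zero_pow (by omega)]
    norm_num
  · -- m ≥ 2
    have hm2 : 2 ≤ m := h2
    set M : ℝ := (m : ℝ) with hM
    have hM2 : (2:ℝ) ≤ M := by rw [hM]; exact_mod_cast hm2
    have hM0 : (0:ℝ) < M := by linarith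
    have hcast : ((m-1 : ℕ) : ℝ) = M - 1 := by
      rw [hM]; push_cast [hm]; ring
    set x : ℝ := (k : ℝ) / M with hx
    have hx32 : (32:ℝ) ≤ x := by
      rw [hx, hM, le_div_iff₀ hM0]
      rw [hM]
      exact_mod_cast hk
    have hx0 : (0:ℝ) < x := by linarith
    set q : ℝ := (M - 1) / M with hq
    have hq0 : (0:ℝ) ≤ q := by
      rw [hq]; apply div_nonneg <;> linarith
    have hq1 : q = 1 - 1/M := by rw [hq]; field_simp
    have hqe : q ≤ Real.exp (-(1/M)) := by
      rw [hq1]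
      have := Real.add_one_le_exp (-(1/M))
      linarith
    have hpowk : q ^ k ≤ Real.exp (-x) := by
      calc q ^ k ≤ Real.exp (-(1/M)) ^ k := pow_le_pow_left₀ hq0 hqe k
        _ = Real.exp ((k:ℝ) * -(1/M)) := by rw [← Real.exp_nat_mul]
        _ = Real.exp (-x) := by rw [hx]; ring_nf
    have hpowk1 : q ^ (k-1) ≤ 3 * Real.exp (-x) := by
      have h1 : q ^ (k-1) ≤ Real.exp (((k-1:ℕ):ℝ) * -(1/M)) := by
        calc q ^ (k-1) ≤ Real.exp (-(1/M)) ^ (k-1) := pow_le_pow_left₀ hq0 hqe _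
          _ = _ := by rw [← Real.exp_nat_mul]
      have hcast1 : ((k-1:ℕ):ℝ) = (k:ℝ) - 1 := by push_cast [hk1]; ring
      have h2 : ((k-1:ℕ):ℝ) * -(1/M) = -x + 1/M := by
        rw [hcast1, hx]; field_simp; ring
      have h3 : Real.exp (-x + 1/M) ≤ Real.exp (-x + 1) := by
        apply Real.exp_le_exp.mpr
        have : 1/M ≤ 1 := by rw [div_le_one hM0]; linarith
        linarith
      have h4 : Real.exp (-x + 1) = Real.exp 1 * Real.exp (-x) := by
        rw [← Real.exp_add]; ring_nf
      have h5 : Real.exp 1 ≤ 3 := by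
        have := Real.exp_one_lt_d9; linarith
      calc q ^ (k-1) ≤ Real.exp (-x + 1/M) := by rw [← h2]; exact h1
        _ ≤ Real.exp (-x + 1) := h3
        _ = Real.exp 1 * Real.exp (-x) := h4
        _ ≤ 3 * Real.exp (-x) := by
            have := Real.exp_pos (-x); nlinarith
    have hx2 : (0:ℝ) < x^2 := by positivity
    have hexp : Real.exp (-x) ≤ 4 / x^2 := by
      have h1 : x/2 ≤ Real.exp (x/2) := by
        have := Real.add_one_le_exp (x/2); linarith
      have h2 : (x/2)^2 ≤ Real.exp x := by
        have hp := Real.exp_pos (x/2)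
        have : Real.exp (x/2) ^ 2 = Real.exp x := by
          rw [sq, ← Real.exp_add, add_halves]
        nlinarith
      have hex : Real.exp (-x) = 1 / Real.exp x := by
        rw [Real.exp_neg, one_div]
      rw [hex, div_le_div_iff₀ (Real.exp_pos x) hx2]
      nlinarith
    have hkey : q^k + x * q^(k-1) ≤ 1/2 := by
      have hE := Real.exp_pos (-x)
      have h1 : x * q^(k-1) ≤ x * (3 * Real.exp (-x)) :=
        mul_le_mul_of_nonneg_left hpowk1 (le_of_lt hx0)
      have h2 : Real.exp (-x) + 3 * x * Real.exp (-x) ≤ (1 + 3*x) * (4/x^2) := by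
        have : (1 + 3*x) * Real.exp (-x) ≤ (1 + 3*x) * (4/x^2) :=
          mul_le_mul_of_nonneg_left hexp (by linarith)
        nlinarith
      have h3 : (1 + 3*x) * (4/x^2) ≤ 1/2 := auxineq x hx32
      linarith
    have hMk : (0:ℝ) < M ^ k := by positivity
    have hqM : M - 1 = q * M := by rw [hq]; field_simp
    have hpowsplit : M ^ k = M ^ (k-1) * M := by
      conv_lhs => rw [show k = (k-1)+1 by omega]
      rw [pow_succ]
    rw [hcast, hqM]
    rw [mul_pow, mul_pow]
    have hxk : (k:ℝ) = x * M := by rw [hx]; field_simp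
    calc q^k * M^k + (k:ℝ) * (q^(k-1) * M^(k-1))
        = q^k * M^k + x * q^(k-1) * (M * M^(k-1)) := by rw [hxk]; ring
      _ = (q^k + x * q^(k-1)) * M^k := by rw [hpowsplit]; ring
      _ ≤ (1/2) * M^k := mul_le_mul_of_nonneg_right hkey (le_of_lt hMk)
      _ = M^k / 2 := by ring

lemma collProb_half (k m : ℕ) (hm : 1 ≤ m) (hk : 32 * m ≤ k) (j : Fin m) :
    (1/2 : ℝ) ≤ collProb k m j := by
  classical
  set P : (Fin k → Fin m) → Prop := fun f => 2 ≤ (univ.filter (fun i => f i = j)).card with hP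
  have htot : (univ.filter P).card + (univ.filter (fun f => ¬ P f)).card
      = m ^ k := by
    rw [Finset.card_filter_add_card_filter_not, Finset.card_univ,
      Fintype.card_fun, Fintype.card_fin, Fintype.card_fin]
  have hA : (univ.filter (fun f => ¬ P f)).card ≤ (m-1)^k + k * (m-1)^(k-1) :=
    cardle k m j
  have hMk : (0:ℝ) < (m:ℝ)^k := by
    have : (0:ℝ) < (m:ℝ) := by exact_mod_cast hm
    positivity
  have hreal : ((univ.filter (fun f => ¬ P f)).card : ℝ) ≤ (m:ℝ)^k / 2 := by
    calc ((univ.filter (fun f => ¬ P f)).card : ℝ)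
        ≤ (((m-1)^k + k * (m-1)^(k-1) : ℕ) : ℝ) := by exact_mod_cast hA
      _ = ((m-1:ℕ):ℝ)^k + (k:ℝ) * ((m-1:ℕ):ℝ)^(k-1) := by push_cast; ring
      _ ≤ (m:ℝ)^k / 2 := realineq k m hm hk
  have hC : (m:ℝ)^k / 2 ≤ ((univ.filter P).card : ℝ) := by
    have h1 : ((univ.filter P).card : ℝ) + ((univ.filter (fun f => ¬ P f)).card : ℝ)
        = (m:ℝ)^k := by exact_mod_cast htot
    linarith
  unfold collProb
  rw [le_div_iff₀ hMk]
  calc (1/2 : ℝ) * (m:ℝ)^k = (m:ℝ)^k / 2 := by ring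
    _ ≤ _ := hC

lemma tendsto_lll : Tendsto (fun n : ℕ => lll n) atTop atTop := by
  have hb : (1:ℝ) < 2 := one_lt_two
  have h1 : Tendsto (Real.logb 2) atTop atTop := Real.tendsto_logb_atTop hb
  have : Tendsto (fun x : ℝ => Real.logb 2 (Real.logb 2 (Real.logb 2 x))) atTop atTop :=
    h1.comp (h1.comp h1)
  exact this.comp tendsto_natCast_atTop_atTop

/-- A window of size `m = cn/lg lg lg n` executed `T = Ω(lg lg n)` times, each execution
throwing at least `εn` balls uniformly into the `m` bins: the expected total number of
collision bins summed over all executions is `Ω(n·lg lg n / lg lg lg n)`. -/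
theorem stmt7 (ε c : ℝ) (hε0 : 0 < ε) (hε1 : ε ≤ 1) (hc : 0 < c) :
    ∀ a > (0 : ℝ), ∃ δ > (0 : ℝ), ∀ᶠ n : ℕ in atTop,
      ∀ (m T : ℕ) (ks : Fin T → ℕ),
        (m : ℝ) = c * n / lll n →
        a * llg n ≤ (T : ℝ) →
        (∀ t : Fin T, ε * n ≤ (ks t : ℝ)) →
        δ * ((n : ℝ) * llg n / lll n) ≤ ∑ t : Fin T, ∑ j : Fin m, collProb (ks t) m j := by
  intro a ha
  refine ⟨a * c / 2, by positivity, ?_⟩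
  filter_upwards [tendsto_lll.eventually_ge_atTop (max 1 (32 * c / ε)),
    eventually_ge_atTop 1] with n hlll hn1
  intro m T ks hm hT hks
  have hlll1 : (1:ℝ) ≤ lll n := le_trans (le_max_left _ _) hlll
  have hlllc : 32 * c / ε ≤ lll n := le_trans (le_max_right _ _) hlll
  have hlll0 : (0:ℝ) < lll n := by linarith
  have hn : (1:ℝ) ≤ (n:ℝ) := by exact_mod_cast hn1
  have hmpos : 1 ≤ m := by
    by_contra h
    push_neg at h
    interval_cases m
    have : (0:ℝ) < c * n / lll n := by positivity
    rw [← hm] at this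
    norm_num at this
  have hm0 : (0:ℝ) < (m:ℝ) := by exact_mod_cast hmpos
  -- k ≥ 32 m for each t
  have hkm : ∀ t : Fin T, 32 * m ≤ ks t := by
    intro t
    have h1 : 32 * (m:ℝ) ≤ ε * n := by
      rw [div_le_iff₀ hε0] at hlllc
      rw [hm, mul_div_assoc', div_le_iff₀ hlll0]
      nlinarith [mul_le_mul_of_nonneg_right hlllc (show (0:ℝ) ≤ n by linarith)]
    have h2 : 32 * (m:ℝ) ≤ (ks t : ℝ) := le_trans h1 (hks t)
    exact_mod_cast h2
  -- lower bound the double sum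
  have hsum : (T:ℝ) * ((m:ℝ) / 2) ≤ ∑ t : Fin T, ∑ j : Fin m, collProb (ks t) m j := by
    calc (T:ℝ) * ((m:ℝ)/2) = ∑ _t : Fin T, ∑ _j : Fin m, (1/2 : ℝ) := by
          simp only [Finset.sum_const, Finset.card_univ, Fintype.card_fin,
            nsmul_eq_mul]
          ring
      _ ≤ _ := by
          apply Finset.sum_le_sum
          intro t _
          apply Finset.sum_le_sum
          intro j _
          exact collProb_half (ks t) m hmpos (hkm t) j
  have hTm : a * llg n * ((m:ℝ)/2) ≤ (T:ℝ) * ((m:ℝ)/2) :=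
    mul_le_mul_of_nonneg_right hT (by positivity)
  have heq : a * c / 2 * ((n:ℝ) * llg n / lll n) = a * llg n * ((m:ℝ)/2) := by
    rw [hm]
    field_simp
  rw [heq]
  exact le_trans hTm hsum
end

section
/- For the function f(W) defined by the recurrence W_{k+1} = (1 + 1/lg lg W_k)·W_k starting from any W_0 ≥ 4: the number of iterations needed for the window size to double from W to 2W is Θ(lg lg W). -/
open Filter

/-- For the recurrence `W_{k+1} = (1 + 1/lg lg W_k)·W_k`, the number of iterations needed
for the window size to double from `W` to `2W` is `Θ(lg lg W)` (for `W` sufficiently large):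
fewer than `c₁·lg lg W` steps do not suffice, and `c₂·lg lg W` steps always suffice. -/
theorem stmt9 :
    ∃ c₁ > (0 : ℝ), ∃ c₂ > (0 : ℝ), ∀ᶠ t : ℝ in atTop,
      ∀ W : ℕ → ℝ, W 0 = t →
        (∀ k, W (k + 1) = (1 + 1 / llg (W k)) * W k) →
        (∀ k : ℕ, (k : ℝ) ≤ c₁ * llg t → W k < 2 * t) ∧
        (∀ k : ℕ, c₂ * llg t ≤ (k : ℝ) → 2 * t ≤ W k) := by
  have h12 : (1:ℝ) < 2 := one_lt_two
  have hlogb2_16 : Real.logb 2 16 = 4 := by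
    rw [show (16:ℝ) = 2 ^ (4:ℕ) by norm_num, Real.logb_pow,
      Real.logb_self_eq_one h12]
    norm_num
  have hlogb2_4 : Real.logb 2 4 = 2 := by
    rw [show (4:ℝ) = 2 ^ (2:ℕ) by norm_num, Real.logb_pow,
      Real.logb_self_eq_one h12]
    norm_num
  -- for x ≥ 16, logb 2 x ≥ 4
  have hlogb_ge : ∀ x : ℝ, 16 ≤ x → 4 ≤ Real.logb 2 x := by
    intro x hx
    calc (4:ℝ) = Real.logb 2 16 := hlogb2_16.symm
    _ ≤ Real.logb 2 x := Real.logb_le_logb_of_le h12 (by norm_num) hx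
  have hllg_ge : ∀ x : ℝ, 16 ≤ x → 2 ≤ llg x := by
    intro x hx
    have := hlogb_ge x hx
    calc (2:ℝ) = Real.logb 2 4 := hlogb2_4.symm
    _ ≤ Real.logb 2 (Real.logb 2 x) := Real.logb_le_logb_of_le h12 (by norm_num) this
  have hmono : ∀ x y : ℝ, 16 ≤ x → x ≤ y → llg x ≤ llg y := by
    intro x y hx hxy
    have h1 : 4 ≤ Real.logb 2 x := hlogb_ge x hx
    exact Real.logb_le_logb_of_le h12 (by linarith)
      (Real.logb_le_logb_of_le h12 (by linarith) hxy)
  refine ⟨1/2, by norm_num, 2, by norm_num, ?_⟩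
  filter_upwards [eventually_ge_atTop (16:ℝ)] with t ht
  intro W hW0 hrec
  have ht0 : (0:ℝ) < t := by linarith
  set L := llg t with hLdef
  have hL2 : 2 ≤ L := hllg_ge t ht
  have hL0 : 0 < L := by linarith
  -- basic growth bounds
  have grow : ∀ k : ℕ, t ≤ W k ∧ W k ≤ Real.exp ((k:ℝ) / L) * t := by
    intro k
    induction k with
    | zero => simp [hW0]
    | succ k ih =>
      obtain ⟨h1, h2⟩ := ih
      have hWk0 : 0 < W k := lt_of_lt_of_le ht0 h1
      have hllg : L ≤ llg (W k) := hmono t (W k) ht h1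
      have hpos : 0 < llg (W k) := lt_of_lt_of_le hL0 hllg
      have hinv0 : 0 ≤ 1 / llg (W k) := by positivity
      rw [hrec k]
      constructor
      · nlinarith
      · have h1div : 1 / llg (W k) ≤ 1 / L := one_div_le_one_div_of_le hL0 hllg
        have hfac : 1 + 1 / llg (W k) ≤ Real.exp (1 / L) := by
          have := Real.add_one_le_exp (1 / L)
          linarith
        calc (1 + 1 / llg (W k)) * W k
            ≤ Real.exp (1 / L) * (Real.exp ((k:ℝ) / L) * t) :=
              mul_le_mul hfac h2 (le_of_lt hWk0) (le_of_lt (Real.exp_pos _))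
        _ = Real.exp (((k:ℕ) + 1 : ℝ) / L) * t := by
              rw [← mul_assoc, ← Real.exp_add]
              congr 1
              field_simp
              ring
        _ = Real.exp (((k+1 : ℕ) : ℝ) / L) * t := by push_cast; ring_nf
  constructor
  · -- upper bound: k ≤ L/2 steps don't reach 2t
    intro k hk
    have h2 := (grow k).2
    have hkL : (k:ℝ) / L ≤ 1/2 := by
      rw [div_le_iff₀ hL0]; linarith
    have hexp : Real.exp ((k:ℝ) / L) < 2 := by
      calc Real.exp ((k:ℝ) / L) ≤ Real.exp (1/2) := Real.exp_le_exp.mpr hkL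
      _ < Real.exp (Real.log 2) := by
            apply Real.exp_lt_exp.mpr
            have := Real.log_two_gt_d9
            linarith
      _ = 2 := Real.exp_log (by norm_num)
    calc W k ≤ Real.exp ((k:ℝ) / L) * t := h2
    _ < 2 * t := by nlinarith
  · -- lower bound: after 2L steps we reach 2t
    set M := L + 1 with hMdef
    have hM0 : 0 < M := by linarith
    have hllg2t : llg (2 * t) ≤ M := by
      have hlt : 4 ≤ Real.logb 2 t := hlogb_ge t ht
      have h2t : Real.logb 2 (2 * t) = 1 + Real.logb 2 t := by
        rw [Real.logb_mul (by norm_num) (ne_of_gt ht0), Real.logb_self_eq_one h12]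
      have : Real.logb 2 (2 * t) ≤ 2 * Real.logb 2 t := by rw [h2t]; linarith
      calc llg (2 * t) = Real.logb 2 (Real.logb 2 (2 * t)) := rfl
      _ ≤ Real.logb 2 (2 * Real.logb 2 t) :=
          Real.logb_le_logb_of_le h12 (by rw [h2t]; linarith) this
      _ = 1 + L := by
          rw [Real.logb_mul (by norm_num) (by linarith), Real.logb_self_eq_one h12]
          rfl
      _ = M := by rw [hMdef]; ring
    have lower : ∀ k : ℕ, 2 * t ≤ W k ∨ (1 + 1/M)^k * t ≤ W k := by
      intro k
      induction k with
      | zero => right; simp [hW0]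
      | succ k ih =>
        have h1 := (grow k).1
        have hWk0 : 0 < W k := lt_of_lt_of_le ht0 h1
        have hllg : L ≤ llg (W k) := hmono t (W k) ht h1
        have hpos : 0 < llg (W k) := lt_of_lt_of_le hL0 hllg
        have hinv0 : 0 ≤ 1 / llg (W k) := by positivity
        rcases ih with h | h
        · left; rw [hrec k]; nlinarith
        · by_cases h2t : 2 * t ≤ W k
          · left; rw [hrec k]; nlinarith
          · right
            push_neg at h2t
            have hllgM : llg (W k) ≤ M :=
              le_trans (hmono (W k) (2*t) (le_trans ht h1) (le_of_lt h2t)) hllg2t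
            have hfac : 1 / M ≤ 1 / llg (W k) := one_div_le_one_div_of_le hpos hllgM
            rw [hrec k]
            have hpow0 : 0 < (1 + 1/M)^k := by positivity
            calc (1 + 1/M)^(k+1) * t = (1 + 1/M) * ((1 + 1/M)^k * t) := by ring
            _ ≤ (1 + 1/llg (W k)) * W k := by
                exact mul_le_mul (by linarith) h (mul_nonneg hpow0.le ht0.le) (by linarith)
    intro k hk
    rcases lower k with h | h
    · exact h
    · have hbern : 1 + (k:ℝ) * (1/M) ≤ (1 + 1/M)^k :=
        one_add_mul_le_pow (le_trans (by norm_num : (-2:ℝ) ≤ 0) (by positivity)) k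
      have hkM : M ≤ (k:ℝ) := by rw [hMdef]; linarith
      have hk1 : (1:ℝ) ≤ (k:ℝ) * (1/M) := by
        rw [mul_one_div, le_div_iff₀ hM0]; linarith
      have h2le : (2:ℝ) ≤ (1 + 1/M)^k := by linarith
      have := mul_le_mul_of_nonneg_right h2le ht0.le
      linarith
end

section
/- Under the cost model T_A = C_A·P + W_A with P = ω(lg n · lg lg lg n / lg lg n): the total time of LogLog-Backoff, T_LLB = Ω((n lg lg n / lg lg lg n)·P), asymptotically exceeds the total time bound of BEB, T_BEB = O(n·P + n lg n); i.e., T_BEB = o(T_LLB) as n → ∞. -/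
open Filter Asymptotics

private lemma tendsto_div_log' : Tendsto (fun x : ℝ => x / Real.log x) atTop atTop := by
  have h0 : Tendsto (fun x : ℝ => Real.log x / x) atTop (nhdsWithin 0 (Set.Ioi 0)) := by
    apply tendsto_nhdsWithin_of_tendsto_nhds_of_eventually_within
    · simpa using Real.isLittleO_log_id_atTop.tendsto_div_nhds_zero
    · filter_upwards [eventually_gt_atTop 1] with x hx
      exact div_pos (Real.log_pos hx) (by linarith)
  have := h0.inv_tendsto_nhdsGT_zero
  refine this.congr' ?_
  filter_upwards [eventually_gt_atTop 1] with x hx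
  simp [Pi.inv_apply, inv_div]

private lemma tendsto_llg' : Tendsto (fun n : ℕ => llg n) atTop atTop := by
  have h : Tendsto (fun x : ℝ => Real.logb 2 x) atTop atTop :=
    Real.tendsto_logb_atTop one_lt_two
  exact (h.comp h).comp tendsto_natCast_atTop_atTop

private lemma tendsto_ratio' : Tendsto (fun n : ℕ => llg n / lll n) atTop atTop := by
  have h : Tendsto (fun t : ℝ => t / Real.logb 2 t) atTop atTop := by
    have : Tendsto (fun t : ℝ => Real.log 2 * (t / Real.log t)) atTop atTop :=
      tendsto_div_log'.const_mul_atTop (Real.log_pos one_lt_two)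
    refine this.congr ?_
    intro t
    rw [Real.logb, div_div_eq_mul_div]; ring
  exact (h.comp tendsto_llg' : _)

/-- Under the cost model `T_A = C_A·P + W_A` with `P = ω(lg n·lg lg lg n/lg lg n)`:
BEB's total-time bound `n·P + n lg n` is `o` of LLB's lower bound `(n lg lg n/lg lg lg n)·P`. -/
theorem stmt13 (P : ℕ → ℝ)
    (hP : (fun n : ℕ => Real.logb 2 n * lll n / llg n) =o[atTop] P) :
    (fun n : ℕ => (n : ℝ) * P n + n * Real.logb 2 n) =o[atTop]
      fun n : ℕ => ((n : ℝ) * llg n / lll n) * P n := by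
  have hllg : ∀ᶠ n : ℕ in atTop, llg n ≠ 0 := by
    filter_upwards [tendsto_llg'.eventually_gt_atTop 0] with n h
    exact ne_of_gt h
  have hlll : ∀ᶠ n : ℕ in atTop, lll n ≠ 0 := by
    have : Tendsto (fun n : ℕ => lll n) atTop atTop := by
      have h : Tendsto (fun x : ℝ => Real.logb 2 x) atTop atTop :=
        Real.tendsto_logb_atTop one_lt_two
      exact h.comp tendsto_llg'
    filter_upwards [this.eventually_gt_atTop 0] with n h
    exact ne_of_gt h
  have part1 : (fun n : ℕ => (n : ℝ) * P n) =o[atTop]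
      fun n : ℕ => ((n : ℝ) * llg n / lll n) * P n := by
    have h1 : (fun _ : ℕ => (1 : ℝ)) =o[atTop] fun n : ℕ => llg n / lll n := by
      rw [isLittleO_const_left]
      right
      exact tendsto_norm_atTop_atTop.comp tendsto_ratio'
    have h2 := (isBigO_refl (fun n : ℕ => (n : ℝ)) atTop).mul_isLittleO
      (h1.mul_isBigO (isBigO_refl P atTop))
    refine h2.congr (fun n => by ring) (fun n => by ring)
  have part2 : (fun n : ℕ => (n : ℝ) * Real.logb 2 n) =o[atTop]
      fun n : ℕ => ((n : ℝ) * llg n / lll n) * P n := by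
    have h2 := hP.mul_isBigO (isBigO_refl (fun n : ℕ => (n : ℝ) * llg n / lll n) atTop)
    refine h2.congr' ?_ ?_
    · filter_upwards [hllg, hlll] with n h1 h2
      field_simp
    · filter_upwards with n
      ring
  exact part1.add part2
end

section
/- Consider the estimation procedure where, in round i = 0, 1, 2, ..., each of n stations independently transmits with probability 2^{−i}, and the procedure halts at the first round in which no station transmits. Then with probability at least 1 − 1/n, the halting round i* satisfies 2^{i*} = Ω(n / lg n), i.e., the resulting estimate W = 2^{i*} is at least c·n/lg n for some constant c > 0. -/
open Finset Filter

/-- Size estimation: in round `i` each of the `n` stations independently transmits with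
probability `2^{−i}`, so round `i` is clear with probability `(1 − 2^{−i})^n`; the procedure
halts at the first clear round and outputs `W = 2^{i*}`.  By a union bound over all rounds
with `2^i ≤ c·n/lg n`, the probability that any such round is clear — hence the probability
that the estimate is below `c·n/lg n` — is at most `1/n`; i.e. with probability at least
`1 − 1/n` the halting round satisfies `2^{i*} = Ω(n/lg n)`. -/
theorem stmt16 :
    ∃ c > (0 : ℝ), ∀ᶠ n : ℕ in atTop,
      ∑ i ∈ (Finset.range n).filter
          (fun i => (2 : ℝ) ^ i ≤ c * n / Real.logb 2 n),
        (1 - (1 / 2 : ℝ) ^ i) ^ n ≤ 1 / (n : ℝ) := by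
  refine ⟨1/10, by norm_num, ?_⟩
  filter_upwards [eventually_ge_atTop 2] with n hn
  have hn1 : (1:ℝ) < n := by exact_mod_cast Nat.lt_of_lt_of_le one_lt_two hn
  have hn0 : (0:ℝ) < n := by linarith
  have hL : 0 < Real.logb 2 n := Real.logb_pos one_lt_two hn1
  have hlogn : 0 ≤ Real.log n := Real.log_nonneg hn1.le
  set L := Real.logb 2 n with hLdef
  -- each qualifying term is at most exp(-(10 * log n))
  have key : ∀ i ∈ (Finset.range n).filter
      (fun i => (2 : ℝ) ^ i ≤ (1/10) * n / L),
      (1 - (1 / 2 : ℝ) ^ i) ^ n ≤ Real.exp (-(10 * Real.log n)) := by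
    intro i hi
    rw [Finset.mem_filter] at hi
    obtain ⟨-, hi⟩ := hi
    set x := (1/2:ℝ)^i with hx
    have hx0 : 0 < x := by positivity
    have hx1 : x ≤ 1 := by
      apply pow_le_one₀ <;> norm_num
    have hmul : x * (2:ℝ)^i = 1 := by
      rw [hx, ← mul_pow]; norm_num
    -- from the filter condition: L ≤ x * ((1/10) * n)
    have h1 : (2:ℝ)^i * L ≤ (1/10) * n := by
      rw [← le_div_iff₀ hL]; exact hi
    have h2 : L ≤ x * ((1/10) * n) := by
      calc L = x * ((2:ℝ)^i * L) := by rw [← mul_assoc, hmul, one_mul]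
        _ ≤ x * ((1/10) * n) := by
            exact mul_le_mul_of_nonneg_left h1 hx0.le
    -- hence 10 * log n ≤ n * x
    have hLlog : Real.log n ≤ L := by
      rw [hLdef, Real.logb, le_div_iff₀ (Real.log_pos one_lt_two)]
      nlinarith [Real.log_two_lt_d9, hlogn]
    have h3 : 10 * Real.log n ≤ n * x := by nlinarith
    have step1 : (1 - x) ^ n ≤ Real.exp (-x) ^ n := by
      apply pow_le_pow_left₀ (by linarith)
      have := Real.add_one_le_exp (-x)
      linarith
    have step2 : Real.exp (-x) ^ n = Real.exp (n * (-x)) := by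
      rw [Real.exp_nat_mul]
    calc (1 - x) ^ n ≤ Real.exp (n * (-x)) := by rw [← step2]; exact step1
      _ ≤ Real.exp (-(10 * Real.log n)) := by
          apply Real.exp_le_exp.mpr; nlinarith
  have card_le : ((Finset.range n).filter
      (fun i => (2 : ℝ) ^ i ≤ (1/10) * n / L)).card ≤ n := by
    calc _ ≤ (Finset.range n).card := Finset.card_le_card (Finset.filter_subset _ _)
      _ = n := Finset.card_range n
  have hsum : ∑ i ∈ (Finset.range n).filter
      (fun i => (2 : ℝ) ^ i ≤ (1/10) * n / L),
      (1 - (1 / 2 : ℝ) ^ i) ^ n ≤ (n : ℝ) * Real.exp (-(10 * Real.log n)) := by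
    calc _ ≤ ((Finset.range n).filter
          (fun i => (2 : ℝ) ^ i ≤ (1/10) * n / L)).card •
            Real.exp (-(10 * Real.log n)) := Finset.sum_le_card_nsmul _ _ _ key
      _ = (((Finset.range n).filter
          (fun i => (2 : ℝ) ^ i ≤ (1/10) * n / L)).card : ℝ) *
            Real.exp (-(10 * Real.log n)) := by rw [nsmul_eq_mul]
      _ ≤ (n : ℝ) * Real.exp (-(10 * Real.log n)) := by
          apply mul_le_mul_of_nonneg_right _ (Real.exp_pos _).le
          exact_mod_cast card_le
  refine hsum.trans ?_
  rw [le_div_iff₀ hn0]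
  have hexp : (n:ℝ) = Real.exp (Real.log n) := (Real.exp_log hn0).symm
  calc (n:ℝ) * Real.exp (-(10 * Real.log n)) * n
      = Real.exp (Real.log n) * Real.exp (-(10 * Real.log n)) * Real.exp (Real.log n) := by
        rw [← hexp]
    _ = Real.exp (Real.log n + -(10 * Real.log n) + Real.log n) := by
        rw [← Real.exp_add, ← Real.exp_add]
    _ ≤ 1 := by
        rw [Real.exp_le_one_iff]; linarith
end
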